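/- A finite simple graph G is a König–Egerváry graph if and only if every maximum independent set of G is a critical independent set. -/

import Mathlib

namespace KEPaper

open SimpleGraph

variable {V : Type*}

/-- `nbhd G S` is the set of vertices having a neighbor in `S`. -/
def nbhd (G : SimpleGraph V) (S : Set V) : Set V := {v | ∃ w ∈ S, G.Adj v w}

/-- `S` is an independent set of `G`: no two vertices of `S` are adjacent. -/
def IsIndep (G : SimpleGraph V) (S : Set V) : Prop :=
  S.Pairwise fun u v => ¬ G.Adj u v

/-- The independence number `α(G)`: maximum cardinality of an independent set. -/
noncomputable def indepNum (G : SimpleGraph V) : ℕ :=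
  sSup {n | ∃ S : Set V, IsIndep G S ∧ S.ncard = n}

/-- The matching number `μ(G)`: maximum cardinality of a matching. -/
noncomputable def matchNum (G : SimpleGraph V) : ℕ :=
  sSup {n | ∃ M : Subgraph G, M.IsMatching ∧ M.edgeSet.ncard = n}

/-- `S` is a maximum independent set of `G`. -/
def IsMaxIndep (G : SimpleGraph V) (S : Set V) : Prop :=
  IsIndep G S ∧ S.ncard = indepNum G

/-- The critical difference `d(G) = max {|S| - |N(S)| : S independent}`. -/
noncomputable def critDiff (G : SimpleGraph V) : ℤ :=
  sSup {d : ℤ | ∃ S : Set V, IsIndep G S ∧ d = (S.ncard : ℤ) - ((nbhd G S).ncard : ℤ)}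

/-- `S` is a critical independent set: independent with `|S| - |N(S)| = d(G)`. -/
def IsCritIndep (G : SimpleGraph V) (S : Set V) : Prop :=
  IsIndep G S ∧ (S.ncard : ℤ) - ((nbhd G S).ncard : ℤ) = critDiff G

/-- `core G` is the intersection of all maximum independent sets of `G`. -/
def core (G : SimpleGraph V) : Set V := ⋂ S ∈ {S : Set V | IsMaxIndep G S}, S

/-- `G` is a König–Egerváry graph: `|V(G)| = α(G) + μ(G)`. -/
def KoenigEgervary (G : SimpleGraph V) : Prop :=
  Nat.card V = indepNum G + matchNum G

/-- `A` is a local maximum independent set of `G`: it is a maximum independent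
set of the subgraph of `G` induced by `N[A] = A ∪ N(A)`. -/
def IsLocalMaxIndep (G : SimpleGraph V) (A : Set V) : Prop :=
  IsMaxIndep (G.induce (A ∪ nbhd G A)) {x : ↥(A ∪ nbhd G A) | ↑x ∈ A}

/-! For any set `S` and matching `M`, the vertices of `M` lying in `S` are matched injectively
into `N(S)`, so `|S| - |N(S)| ≤ |V| - 2μ(G)` and hence `d(G) ≤ |V| - 2μ(G)`. A maximum independent
set `S` dominates the graph, so `|S| - |N(S)| = 2α(G) - |V|`; this attains the bound, i.e. `S` is
critical, exactly when `α(G) + μ(G) = |V|`. For the converse, criticality of `S` gives Hall's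
condition for matching `N(S)` into `S`, whence `μ(G) ≥ |N(S)| = |V| - α(G)`. -/

theorem _root_.SimpleGraph.Subgraph.IsMatching.ncard_verts [Finite V] {G : SimpleGraph V}
    {M : Subgraph G} (hM : M.IsMatching) : M.verts.ncard = 2 * M.edgeSet.ncard := by
  have hfiber (e : M.edgeSet) : Nat.card {v // hM.toEdge v = e} = 2 := by
    obtain ⟨⟨u, v⟩, huv⟩ := e
    change Nat.card (hM.toEdge ⁻¹' {_}) = 2
    rw [hM.toEdge_preimage_singleton huv, Nat.card_coe_set_eq, Set.ncard_pair]
    simpa using (M.adj_sub huv).ne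
  have := Fintype.ofFinite M.edgeSet
  rw [← Nat.card_coe_set_eq, ← Nat.card_coe_set_eq,
    ← Nat.card_congr (Equiv.sigmaFiberEquiv hM.toEdge), Nat.card_sigma]
  simp [hfiber, mul_comm]

section

variable {G : SimpleGraph V} {M : Subgraph G} {S : Set V}

theorem IsIndep.disjoint_nbhd (hS : IsIndep G S) : Disjoint S (nbhd G S) := by
  rw [Set.disjoint_left]
  rintro v hv ⟨w, hw, hvw⟩
  exact hS hv hw hvw.ne hvw

theorem IsIndep.insert {v : V} (hS : IsIndep G S) (hv : v ∉ nbhd G S) :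
    IsIndep G (insert v S) :=
  Set.pairwise_insert.mpr ⟨hS, fun w hw _ => ⟨fun hvw => hv ⟨w, hw, hvw⟩,
    fun hwv => hv ⟨w, hw, hwv.symm⟩⟩⟩

theorem critDiff_le {d : ℤ}
    (h : ∀ S, IsIndep G S → (S.ncard : ℤ) - (nbhd G S).ncard ≤ d) : critDiff G ≤ d :=
  csSup_le ⟨0, ∅, by simp [IsIndep, nbhd]⟩ (by rintro _ ⟨S, hS, rfl⟩; exact h S hS)

variable [Finite V]

theorem IsIndep.ncard_le_indepNum (hS : IsIndep G S) : S.ncard ≤ indepNum G :=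
  le_csSup ⟨Nat.card V, by rintro _ ⟨T, -, rfl⟩; exact Set.ncard_le_card T⟩ ⟨S, hS, rfl⟩

theorem exists_isMaxIndep (G : SimpleGraph V) : ∃ S, IsMaxIndep G S :=
  Nat.sSup_mem (s := {n | ∃ S : Set V, IsIndep G S ∧ S.ncard = n}) ⟨0, ∅, by simp [IsIndep]⟩
    ⟨Nat.card V, by rintro _ ⟨T, -, rfl⟩; exact Set.ncard_le_card T⟩

theorem IsIndep.ncard_sub_ncard_nbhd_le_critDiff (hS : IsIndep G S) :
    (S.ncard : ℤ) - (nbhd G S).ncard ≤ critDiff G := by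
  refine le_csSup ⟨Nat.card V, ?_⟩ ⟨S, hS, rfl⟩
  rintro _ ⟨T, -, rfl⟩
  have := Set.ncard_le_card T
  omega

theorem IsMaxIndep.union_nbhd_eq_univ (hS : IsMaxIndep G S) : S ∪ nbhd G S = Set.univ := by
  refine Set.eq_univ_of_forall fun v => by_contra fun hv => ?_
  obtain ⟨hvS, hvN⟩ := not_or.mp hv
  have := (hS.1.insert hvN).ncard_le_indepNum
  rw [Set.ncard_insert_of_notMem hvS, hS.2] at this
  omega

theorem IsMaxIndep.ncard_add_ncard_nbhd (hS : IsMaxIndep G S) :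
    S.ncard + (nbhd G S).ncard = Nat.card V := by
  rw [← Set.ncard_union_eq hS.1.disjoint_nbhd, hS.union_nbhd_eq_univ, Set.ncard_univ]

theorem le_matchNum (hM : M.IsMatching) : M.edgeSet.ncard ≤ matchNum G :=
  le_csSup ⟨Nat.card (Sym2 V), by rintro _ ⟨N, -, rfl⟩; exact Set.ncard_le_card _⟩ ⟨M, hM, rfl⟩

theorem exists_isMatching_ncard_edgeSet_eq_matchNum (G : SimpleGraph V) :
    ∃ M : Subgraph G, M.IsMatching ∧ M.edgeSet.ncard = matchNum G :=
  Nat.sSup_mem (s := {n | ∃ M : Subgraph G, M.IsMatching ∧ M.edgeSet.ncard = n})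
    ⟨0, ⊥, fun v hv => absurd hv (by simp), by simp⟩
    ⟨Nat.card (Sym2 V), by rintro _ ⟨N, -, rfl⟩; exact Set.ncard_le_card _⟩

theorem ncard_verts_inter_le_ncard_nbhd (hM : M.IsMatching) (S : Set V) :
    (M.verts ∩ S).ncard ≤ (nbhd G S).ncard := by
  choose! partner hpartner using fun v (hv : v ∈ M.verts) => (hM hv).exists
  refine Set.ncard_le_ncard_of_injOn partner ?_ ?_
  · rintro v ⟨hv, hvS⟩
    exact ⟨v, hvS, (M.adj_sub (hpartner v hv)).symm⟩
  · rintro v ⟨hv, -⟩ w ⟨hw, -⟩ h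
    exact hM.eq_of_adj_left (hpartner v hv).symm (by rw [h]; exact (hpartner w hw).symm)

theorem ncard_add_ncard_verts_le (hM : M.IsMatching) (S : Set V) :
    S.ncard + M.verts.ncard ≤ Nat.card V + (nbhd G S).ncard := by
  have hsplit := Set.ncard_inter_add_ncard_sdiff_eq_ncard M.verts S
  have hcover : S.ncard + (M.verts \ S).ncard ≤ Nat.card V := by
    rw [← Set.ncard_union_eq Set.disjoint_sdiff_right]
    exact Set.ncard_le_card _
  have hmatched := ncard_verts_inter_le_ncard_nbhd hM S
  omega

theorem critDiff_le_card_sub_two_mul_matchNum (G : SimpleGraph V) :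
    critDiff G ≤ Nat.card V - 2 * matchNum G := by
  obtain ⟨M, hM, hcard⟩ := exists_isMatching_ncard_edgeSet_eq_matchNum G
  refine critDiff_le fun S _ => ?_
  have hS := ncard_add_ncard_verts_le hM S
  rw [hM.ncard_verts, hcard] at hS
  omega

theorem indepNum_add_matchNum_le (G : SimpleGraph V) :
    indepNum G + matchNum G ≤ Nat.card V := by
  obtain ⟨S, hS⟩ := exists_isMaxIndep G
  have hd := hS.1.ncard_sub_ncard_nbhd_le_critDiff.trans (critDiff_le_card_sub_two_mul_matchNum G)
  have hcover := hS.ncard_add_ncard_nbhd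
  have hα := hS.2
  omega

theorem IsCritIndep.ncard_le_ncard_inter_nbhd (hS : IsCritIndep G S) {Y : Set V}
    (hY : Y ⊆ nbhd G S) : Y.ncard ≤ (S ∩ nbhd G Y).ncard := by
  -- Deleting `N(Y)` from `S` removes all of `Y` from `N(S)`, so criticality of `S` bounds `|Y|`.
  have hnbhd : nbhd G (S \ nbhd G Y) ⊆ nbhd G S \ Y := by
    rintro v ⟨w, ⟨hwS, hwY⟩, hvw⟩
    exact ⟨⟨w, hwS, hvw⟩, fun hvY => hwY ⟨v, hvY, hvw.symm⟩⟩
  have hindep : IsIndep G (S \ nbhd G Y) := hS.1.mono Set.sdiff_subset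
  have hcrit := hindep.ncard_sub_ncard_nbhd_le_critDiff
  rw [← hS.2] at hcrit
  have hsplitS := Set.ncard_inter_add_ncard_sdiff_eq_ncard S (nbhd G Y)
  have hsplitN := Set.ncard_sdiff_add_ncard_of_subset hY
  have hnbhd_card := Set.ncard_le_ncard hnbhd
  omega

theorem IsCritIndep.exists_injective_adj (hS : IsCritIndep G S) :
    ∃ f : nbhd G S → S, Function.Injective f ∧ ∀ v : nbhd G S, G.Adj v (f v) := by
  classical
  have := Fintype.ofFinite S
  refine (Fintype.all_card_le_filter_rel_iff_exists_injective
    (fun (v : nbhd G S) (w : S) => G.Adj v w)).mp fun A => ?_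
  have hHall := hS.ncard_le_ncard_inter_nbhd (Y := Subtype.val '' (A : Set (nbhd G S)))
    (by rintro _ ⟨v, -, rfl⟩; exact v.2)
  have hsub : S ∩ nbhd G (Subtype.val '' (A : Set (nbhd G S))) ⊆
      Subtype.val '' (({w | ∃ v ∈ A, G.Adj v w} : Finset S) : Set S) := by
    rintro u ⟨huS, _, ⟨v, hvA, rfl⟩, huv⟩
    exact ⟨⟨u, huS⟩, by simpa using ⟨v, ⟨v.2, hvA⟩, huv.symm⟩, rfl⟩
  have := hHall.trans (Set.ncard_le_ncard hsub)
  rwa [Set.ncard_image_of_injective _ Subtype.val_injective,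
    Set.ncard_image_of_injective _ Subtype.val_injective, Set.ncard_coe_finset,
    Set.ncard_coe_finset] at this

theorem IsCritIndep.ncard_nbhd_le_matchNum (hS : IsCritIndep G S) :
    (nbhd G S).ncard ≤ matchNum G := by
  obtain ⟨f, hf, hadj⟩ := hS.exists_injective_adj
  let g : nbhd G S → V := fun v => f v
  have hg : Function.Injective g := Subtype.val_injective.comp hf
  have hdisj : Disjoint (nbhd G S) (Set.range g) :=
    hS.1.disjoint_nbhd.symm.mono_right (by rintro _ ⟨v, rfl⟩; exact (f v).2)
  obtain ⟨M, hverts, hM⟩ :=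
    Subgraph.IsMatching.exists_of_disjoint_sets_of_equiv hdisj (Equiv.ofInjective g hg) hadj
  have hcard := hM.ncard_verts
  rw [hverts, Set.ncard_union_eq hdisj, Set.ncard_range_of_injective hg,
    Nat.card_coe_set_eq] at hcard
  have hle := le_matchNum hM
  omega

end

/-- A finite simple graph `G` is a König–Egerváry graph if and only if every
maximum independent set of `G` is a critical independent set. -/
theorem KE_iff_forall_maxIndep_critIndep [Finite V] (G : SimpleGraph V) :
    KoenigEgervary G ↔ ∀ S : Set V, IsMaxIndep G S → IsCritIndep G S := by
  unfold KoenigEgervary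
  constructor
  · intro hKE S hS
    refine ⟨hS.1, le_antisymm hS.1.ncard_sub_ncard_nbhd_le_critDiff ?_⟩
    have hd := critDiff_le_card_sub_two_mul_matchNum G
    have hcover := hS.ncard_add_ncard_nbhd
    have hα := hS.2
    omega
  · intro hcrit
    obtain ⟨S, hS⟩ := exists_isMaxIndep G
    have hμ := (hcrit S hS).ncard_nbhd_le_matchNum
    have hKE := indepNum_add_matchNum_le G
    have hcover := hS.ncard_add_ncard_nbhd
    have hα := hS.2
    omega

end KEPaper
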